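/- For every α : ℕ → ℕ, the set of isolated points of T_α equals ⋃_{i∈ℕ} ⟨i⟩∗{δ ∈ T_{α(i)} | ∃ p, δ(p) + 1 = α(i)}. -/
import Mathlib


/-- The toy spread `T_n`. -/
def toy (n : ℕ) : Set (ℕ → ℕ) :=
  {α | ∀ i : ℕ, α i ≤ α (i + 1) ∧ α i < n}

/-- `⟨i⟩∗X`: the set of sequences beginning with `i` whose tail lies in `X`. -/
def consSet (i : ℕ) (X : Set (ℕ → ℕ)) : Set (ℕ → ℕ) :=
  {β | β 0 = i ∧ (fun k => β (k + 1)) ∈ X}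

/-- `T_α` for `α : ℕ → ℕ`. -/
def toyFam (α : ℕ → ℕ) : Set (ℕ → ℕ) :=
  ⋃ i : ℕ, consSet i (toy (α i))

/-- `x` is an isolated point of `F`. -/
def IsolatedPt (F : Set (ℕ → ℕ)) (x : ℕ → ℕ) : Prop :=
  x ∈ F ∧ ∃ U ∈ nhds x, U ∩ F = {x}

lemma toy_mono {n : ℕ} {f : ℕ → ℕ} (hf : f ∈ toy n) : Monotone f :=
  monotone_nat_of_le_succ fun k => (hf k).1

theorem isolated_toyFam (α : ℕ → ℕ) :
    {x | IsolatedPt (toyFam α) x} =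
      ⋃ i : ℕ, consSet i {δ ∈ toy (α i) | ∃ p : ℕ, δ p + 1 = α i} := by
  ext x
  simp only [Set.mem_setOf_eq, Set.mem_iUnion, IsolatedPt]
  constructor
  · rintro ⟨hxF, U, hU, hUF⟩
    obtain ⟨i, hx0, hδ⟩ := Set.mem_iUnion.mp hxF
    refine ⟨i, hx0, hδ, ?_⟩
    by_contra hne
    push_neg at hne
    have hδ' : ∀ k, x (k + 1) ≤ x (k + 1 + 1) ∧ x (k + 1) < α i := hδ
    have hαpos : 1 ≤ α i := lt_of_le_of_lt (Nat.zero_le _) (hδ' 0).2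
    have hlt : ∀ p, x (p + 1) + 1 < α i := fun p =>
      lt_of_le_of_ne (hδ' p).2 (hne p)
    rw [nhds_pi, Filter.mem_pi] at hU
    obtain ⟨I, hIfin, t, ht, hsub⟩ := hU
    obtain ⟨N, hN⟩ := hIfin.bddAbove
    let y : ℕ → ℕ := fun j => if j ≤ N + 1 then x j else α i - 1
    have hyval : ∀ j, y j = if j ≤ N + 1 then x j else α i - 1 := fun _ => rfl
    have hyF : y ∈ toyFam α := by
      refine Set.mem_iUnion.mpr ⟨i, ?_, ?_⟩
      · rw [hyval 0, if_pos (by omega)]; exact hx0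
      · intro k
        show y (k + 1) ≤ y (k + 1 + 1) ∧ y (k + 1) < α i
        rw [hyval (k + 1), hyval (k + 1 + 1)]
        rcases le_or_gt (k + 1 + 1) (N + 1) with h | h
        · rw [if_pos h, if_pos (by omega)]
          exact hδ' k
        · rcases le_or_gt (k + 1) (N + 1) with h2 | h2
          · rw [if_pos h2, if_neg (by omega)]
            have := hlt k
            omega
          · rw [if_neg (by omega), if_neg (by omega)]
            omega
    have hyU : y ∈ U := by
      apply hsub
      intro j hj
      have hjN : j ≤ N := hN hj
      rw [hyval j, if_pos (by omega)]
      exact mem_of_mem_nhds (ht j)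
    have hyx : y = x := by
      have : y ∈ ({x} : Set (ℕ → ℕ)) := hUF ▸ ⟨hyU, hyF⟩
      simpa using this
    have h1 : y (N + 1 + 1) = α i - 1 := by rw [hyval, if_neg (by omega)]
    have h2 : y (N + 1 + 1) = x (N + 1 + 1) := by rw [hyx]
    have := hlt (N + 1)
    omega
  · rintro ⟨i, hx0, hδ, p, hp⟩
    refine ⟨Set.mem_iUnion.mpr ⟨i, hx0, hδ⟩,
      Set.pi (Set.Iic (p + 1)) (fun j => {x j}), ?_, ?_⟩
    · exact set_pi_mem_nhds (Set.finite_Iic _) (fun j _ => by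
        simp [mem_nhds_discrete])
    · ext y
      constructor
      · rintro ⟨hyU, hyF⟩
        obtain ⟨j, hy0, hε⟩ := Set.mem_iUnion.mp hyF
        have hagree : ∀ m ≤ p + 1, y m = x m := fun m hm =>
          hyU m (Set.mem_Iic.mpr hm)
        have hji : j = i := by
          rw [← hy0, hagree 0 (by omega), hx0]
        subst hji
        have key : y = x := by
          funext m
          rcases le_or_gt m (p + 1) with hm | hm
          · exact hagree m hm
          · obtain ⟨q, rfl⟩ : ∃ q, m = q + 1 := ⟨m - 1, by omega⟩
            have hq : p ≤ q := by omega
            -- tails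
            have hεp : y (p + 1) = x (p + 1) := hagree _ le_rfl
            have hp' : x (p + 1) + 1 = α j := hp
            have hxp : x (p + 1) = α j - 1 := by omega
            -- y tail is monotone
            have hymono := toy_mono hε
            have hxmono := toy_mono hδ
            have h1 : α j - 1 ≤ y (q + 1) := by
              have := hymono hq
              simp only at this
              omega
            have h2 : y (q + 1) < α j := (hε q).2
            have h3 : α j - 1 ≤ x (q + 1) := by
              have := hxmono hq
              simp only at this
              omega
            have h4 : x (q + 1) < α j := (hδ q).2
            omega
        exact key
      · rintro rfl
        exact ⟨fun j _ => rfl, Set.mem_iUnion.mpr ⟨i, hx0, hδ⟩⟩
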